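/- Let μ₀ be a probability measure on (-∞,0] with δ_r(μ₀) < ∞ and let α₁, α₂ ≥ 0 with α₁ + α₂δ_r(μ₀) < 1. Suppose G : C_r → ℝ^d satisfies |G(ξ)|² ≤ α₁|ξ(0)|² + α₂∫_{-∞}^0 |ξ(θ)|² μ₀(dθ). Let X : ℝ → ℝ^d be continuous with X_0 ∈ C_r and set Λ^X(s) = X(s) - G(X_s). Then with β₁ := (1 + √(α₁ + α₂δ_r(μ₀)))², there exists a constant c₁ > 0 (depending on α₁, α₂, δ_r(μ₀)) such that for all t ≥ 0: ∫_0^t e^{2rs}|Λ^X(s)|² ds ≤ c₁‖X_0‖_r² t + β₁ ∫_0^t e^{2rs}|X(s)|² ds. -/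

import Mathlib

/-!
Write `φ u = e^{2ru}|X u|²`. Pointwise, `(a + b)² ≤ (1 + ε)a² + (1 + 1/ε)b²` and the bound on `G`
give `e^{2rs}|Λ^X(s)|² ≤ (1 + ε + (1 + 1/ε)α₁) φ(s) + (1 + 1/ε)α₂ ∫ e^{-2rθ} φ(s + θ) μ₀(dθ)`.
By Fubini, and since `μ₀` lives on `(-∞, 0]` where `φ ≤ ‖X_0‖_r²`, the time integral of the last
integral is at most `δ_r(μ₀)(‖X_0‖_r² t + ∫_0^t φ)`. The coefficient of `∫_0^t φ` is then
`1 + ε + (1 + 1/ε)ε² = (1 + ε)²` for `ε = √(α₁ + α₂δ_r(μ₀))`.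
-/

open MeasureTheory intervalIntegral

lemma add_sq_le_one_add_mul_sq {ε : ℝ} (hε : 0 < ε) (a b : ℝ) :
    (a + b) ^ 2 ≤ (1 + ε) * a ^ 2 + (1 + ε⁻¹) * b ^ 2 := by
  have key : (1 + ε) * a ^ 2 + (1 + ε⁻¹) * b ^ 2 - (a + b) ^ 2 = (ε * a - b) ^ 2 / ε := by
    field_simp
    ring
  nlinarith [div_nonneg (sq_nonneg (ε * a - b)) hε.le]

lemma norm_sub_sq_le_one_add_mul_sq {E : Type*} [SeminormedAddCommGroup E] {ε : ℝ} (hε : 0 < ε)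
    (x y : E) : ‖x - y‖ ^ 2 ≤ (1 + ε) * ‖x‖ ^ 2 + (1 + ε⁻¹) * ‖y‖ ^ 2 :=
  (pow_le_pow_left₀ (norm_nonneg _) (norm_sub_le x y) 2).trans (add_sq_le_one_add_mul_sq hε _ _)

lemma integral_comp_add_right_le {φ : ℝ → ℝ} {M t θ : ℝ} (hφ : Continuous φ)
    (hφ0 : ∀ u, 0 ≤ φ u) (hφM : ∀ u ≤ 0, φ u ≤ M) (ht : 0 ≤ t) (hθ : θ ≤ 0) :
    ∫ s in 0..t, φ (s + θ) ≤ M * t + ∫ s in 0..t, φ s := by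
  have hint : ∀ a b, IntervalIntegrable φ volume a b := hφ.intervalIntegrable
  rw [integral_comp_add_right φ θ, zero_add]
  rcases le_or_gt (t + θ) 0 with hneg | hpos
  · calc ∫ u in θ..t + θ, φ u ≤ ∫ _ in θ..t + θ, M :=
          integral_mono_on (by linarith) (hint _ _) intervalIntegrable_const
            fun u hu => hφM u (hu.2.trans hneg)
      _ = M * t := by simp only [intervalIntegral.integral_const, smul_eq_mul]; ring
      _ ≤ M * t + ∫ s in 0..t, φ s :=
          le_add_of_nonneg_right (integral_nonneg ht fun u _ => hφ0 u)
  · have hM : 0 ≤ M := (hφ0 0).trans (hφM 0 le_rfl)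
    rw [← integral_add_adjacent_intervals (hint θ 0) (hint 0 (t + θ))]
    gcongr ?_ + ?_
    · calc ∫ u in θ..0, φ u ≤ ∫ _ in θ..0, M :=
            integral_mono_on hθ (hint _ _) intervalIntegrable_const fun u hu => hφM u hu.2
        _ = M * -θ := by simp only [intervalIntegral.integral_const, smul_eq_mul]; ring
        _ ≤ M * t := by gcongr; linarith
    · exact integral_mono_interval le_rfl hpos.le (by linarith) (ae_of_all _ hφ0) (hint 0 t)

section Fubini

variable {μ₀ : Measure ℝ} {w φ : ℝ → ℝ} {M t : ℝ}

lemma integrable_mul_comp_add_prod [SFinite μ₀] (hsupp : ∀ᵐ θ ∂μ₀, θ ≤ 0)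
    (hw : Integrable w μ₀) (hφ : Continuous φ) (hφ0 : ∀ u, 0 ≤ φ u) (hφM : ∀ u ≤ 0, φ u ≤ M) :
    Integrable (Function.uncurry fun s θ => w θ * φ (s + θ))
      ((volume.restrict (Set.Ioc 0 t)).prod μ₀) := by
  obtain ⟨C, hC⟩ : ∃ C, ∀ u ∈ Set.Icc 0 t, ‖φ u‖ ≤ C :=
    isCompact_Icc.exists_bound_of_continuousOn hφ.continuousOn
  have hbound : ∀ u ≤ t, ‖φ u‖ ≤ max M C := by
    intro u hu
    rcases le_or_gt u 0 with hneg | hpos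
    · rw [Real.norm_of_nonneg (hφ0 u)]
      exact (hφM u hneg).trans (le_max_left _ _)
    · exact (hC u ⟨hpos.le, hu⟩).trans (le_max_right _ _)
  have hae : ∀ᵐ p ∂(volume.restrict (Set.Ioc 0 t)).prod μ₀, p.1 ∈ Set.Ioc 0 t ∧ p.2 ≤ 0 := by
    filter_upwards [Measure.quasiMeasurePreserving_fst.ae (ae_restrict_mem measurableSet_Ioc),
      Measure.quasiMeasurePreserving_snd.ae hsupp] with p hs hθ using ⟨hs, hθ⟩
  refine Integrable.mono' ((integrableOn_const (C := (1 : ℝ)) measure_Ioc_lt_top.ne).mul_prod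
    (hw.norm.mul_const (max M C))) ?_ ?_
  · exact hw.aestronglyMeasurable.comp_snd.mul
      (hφ.comp (continuous_fst.add continuous_snd)).aestronglyMeasurable
  · filter_upwards [hae] with p ⟨hs, hθ⟩
    rw [Function.uncurry_apply_pair, norm_mul, one_mul]
    exact mul_le_mul_of_nonneg_left (hbound _ (by linarith [hs.2])) (norm_nonneg _)

lemma integral_integral_mul_comp_add_le [SFinite μ₀] (hsupp : ∀ᵐ θ ∂μ₀, θ ≤ 0)
    (hw : Integrable w μ₀) (hw0 : ∀ θ, 0 ≤ w θ) (hφ : Continuous φ) (hφ0 : ∀ u, 0 ≤ φ u)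
    (hφM : ∀ u ≤ 0, φ u ≤ M) (ht : 0 ≤ t) :
    ∫ s in 0..t, ∫ θ, w θ * φ (s + θ) ∂μ₀ ≤ (∫ θ, w θ ∂μ₀) * (M * t + ∫ s in 0..t, φ s) := by
  have hint := integrable_mul_comp_add_prod (t := t) hsupp hw hφ hφ0 hφM
  rw [intervalIntegral_integral_swap (by rwa [Set.uIoc_of_le ht]),
    ← MeasureTheory.integral_mul_const]
  refine integral_mono_ae ?_ (hw.mul_const _) ?_
  · simp only [integral_of_le ht]
    exact hint.integral_prod_right
  · filter_upwards [hsupp] with θ hθ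
    rw [intervalIntegral.integral_const_mul]
    exact mul_le_mul_of_nonneg_left (integral_comp_add_right_le hφ hφ0 hφM ht hθ) (hw0 θ)

end Fubini

section NeutralTerm

open Real

variable {E : Type*} [NormedAddCommGroup E] {μ₀ : Measure ℝ} {α₁ α₂ r ε : ℝ}
  {G : (ℝ → E) → E} {X : ℝ → E}

lemma exp_mul_norm_sub_sq_le (hε : 0 < ε)
    (hG : ∀ ξ : ℝ → E, ‖G ξ‖ ^ 2 ≤ α₁ * ‖ξ 0‖ ^ 2 + α₂ * ∫ θ, ‖ξ θ‖ ^ 2 ∂μ₀) (s : ℝ) :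
    exp (2 * r * s) * ‖X s - G (fun θ => X (s + θ))‖ ^ 2 ≤
      ((1 + ε) + (1 + ε⁻¹) * α₁) * (exp (2 * r * s) * ‖X s‖ ^ 2) +
        (1 + ε⁻¹) * α₂ *
          ∫ θ, exp (-2 * r * θ) * (exp (2 * r * (s + θ)) * ‖X (s + θ)‖ ^ 2) ∂μ₀ := by
  have hshift : ∀ θ, exp (-2 * r * θ) * (exp (2 * r * (s + θ)) * ‖X (s + θ)‖ ^ 2) =
      exp (2 * r * s) * ‖X (s + θ)‖ ^ 2 := by
    intro θ
    rw [← mul_assoc, ← exp_add]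
    ring_nf
  have hGs := hG fun θ => X (s + θ)
  simp only [add_zero] at hGs
  simp_rw [hshift, MeasureTheory.integral_const_mul]
  calc exp (2 * r * s) * ‖X s - G (fun θ => X (s + θ))‖ ^ 2
      ≤ exp (2 * r * s) * ((1 + ε) * ‖X s‖ ^ 2 +
          (1 + ε⁻¹) * (α₁ * ‖X s‖ ^ 2 + α₂ * ∫ θ, ‖X (s + θ)‖ ^ 2 ∂μ₀)) := by
        gcongr
        exact (norm_sub_sq_le_one_add_mul_sq hε _ _).trans (by gcongr)
    _ = _ := by ring

lemma integral_exp_mul_norm_sub_sq_le [SFinite μ₀] (hε : 0 < ε) (hα₂ : 0 ≤ α₂)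
    (hsupp : ∀ᵐ θ ∂μ₀, θ ≤ 0) (hw : Integrable (fun θ => exp (-2 * r * θ)) μ₀)
    (hG : ∀ ξ : ℝ → E, ‖G ξ‖ ^ 2 ≤ α₁ * ‖ξ 0‖ ^ 2 + α₂ * ∫ θ, ‖ξ θ‖ ^ 2 ∂μ₀)
    (hX : Continuous X) {M t : ℝ} (hXM : ∀ u ≤ 0, exp (2 * r * u) * ‖X u‖ ^ 2 ≤ M)
    (ht : 0 ≤ t) :
    ∫ s in 0..t, exp (2 * r * s) * ‖X s - G (fun θ => X (s + θ))‖ ^ 2 ≤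
      (1 + ε⁻¹) * α₂ * (∫ θ, exp (-2 * r * θ) ∂μ₀) * M * t +
        ((1 + ε) + (1 + ε⁻¹) * (α₁ + α₂ * ∫ θ, exp (-2 * r * θ) ∂μ₀)) *
          ∫ s in 0..t, exp (2 * r * s) * ‖X s‖ ^ 2 := by
  set φ : ℝ → ℝ := fun u => exp (2 * r * u) * ‖X u‖ ^ 2
  set K : ℝ → ℝ := fun s => ∫ θ, exp (-2 * r * θ) * φ (s + θ) ∂μ₀
  have hφ : Continuous φ := by fun_prop
  have hφ0 : ∀ u, 0 ≤ φ u := fun u => by positivity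
  have hK : IntervalIntegrable K volume 0 t := by
    rw [intervalIntegrable_iff_integrableOn_Ioc_of_le ht]
    exact (integrable_mul_comp_add_prod hsupp hw hφ hφ0 hXM).integral_prod_left
  have hKle := integral_integral_mul_comp_add_le hsupp hw (fun θ => (exp_pos _).le) hφ hφ0 hXM ht
  have hmajorant := ((hφ.intervalIntegrable 0 t).const_mul ((1 + ε) + (1 + ε⁻¹) * α₁)).add
    (hK.const_mul ((1 + ε⁻¹) * α₂))
  calc ∫ s in 0..t, exp (2 * r * s) * ‖X s - G (fun θ => X (s + θ))‖ ^ 2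
      ≤ ∫ s in 0..t, (((1 + ε) + (1 + ε⁻¹) * α₁) * φ s + (1 + ε⁻¹) * α₂ * K s) := by
        simp only [integral_of_le ht]
        exact setIntegral_mono_of_nonneg (fun s _ => by positivity)
          (fun s _ => exp_mul_norm_sub_sq_le hε hG s) hmajorant.1
    _ = ((1 + ε) + (1 + ε⁻¹) * α₁) * (∫ s in 0..t, φ s) +
          (1 + ε⁻¹) * α₂ * ∫ s in 0..t, K s := by
        rw [integral_add ((hφ.intervalIntegrable 0 t).const_mul _) (hK.const_mul _),
          intervalIntegral.integral_const_mul, intervalIntegral.integral_const_mul]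
    _ ≤ ((1 + ε) + (1 + ε⁻¹) * α₁) * (∫ s in 0..t, φ s) +
          (1 + ε⁻¹) * α₂ * ((∫ θ, exp (-2 * r * θ) ∂μ₀) * (M * t + ∫ s in 0..t, φ s)) := by
        gcongr
    _ = _ := by ring

end NeutralTerm

theorem stmt_10_general (d : ℕ) (r α₁ α₂ : ℝ) (hα₁ : 0 ≤ α₁) (hα₂ : 0 ≤ α₂)
    (μ₀ : Measure ℝ) [IsProbabilityMeasure μ₀] (hsupp : μ₀ (Set.Ioi 0) = 0)
    (δ : ℝ) (hδ : δ = ∫ θ, Real.exp (-2 * r * θ) ∂μ₀)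
    (hδint : Integrable (fun θ => Real.exp (-2 * r * θ)) μ₀)
    (G : (ℝ → EuclideanSpace ℝ (Fin d)) → EuclideanSpace ℝ (Fin d))
    (hG : ∀ ξ : ℝ → EuclideanSpace ℝ (Fin d),
      ‖G ξ‖ ^ 2 ≤ α₁ * ‖ξ 0‖ ^ 2 + α₂ * ∫ θ, ‖ξ θ‖ ^ 2 ∂μ₀)
    (X : ℝ → EuclideanSpace ℝ (Fin d)) (hX : Continuous X)
    (N : ℝ) (hN : ∀ θ : ℝ, θ ≤ 0 → Real.exp (r * θ) * ‖X θ‖ ≤ N)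
    (β₁ : ℝ) (hβ₁ : β₁ = (1 + Real.sqrt (α₁ + α₂ * δ)) ^ 2) :
    ∃ c₁ : ℝ, 0 < c₁ ∧ ∀ t : ℝ, 0 ≤ t →
      ∫ s in (0:ℝ)..t, Real.exp (2 * r * s) * ‖X s - G (fun θ => X (s + θ))‖ ^ 2
        ≤ c₁ * N ^ 2 * t
          + β₁ * ∫ s in (0:ℝ)..t, Real.exp (2 * r * s) * ‖X s‖ ^ 2 := by
  have hδpos : 0 < δ := hδ ▸ integral_exp_pos hδint
  have hXN : ∀ u ≤ 0, Real.exp (2 * r * u) * ‖X u‖ ^ 2 ≤ N ^ 2 := fun u hu =>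
    calc Real.exp (2 * r * u) * ‖X u‖ ^ 2 = (Real.exp (r * u) * ‖X u‖) ^ 2 := by
          rw [mul_pow, ← Real.exp_nat_mul]; ring_nf
      _ ≤ N ^ 2 := pow_le_pow_left₀ (by positivity) (hN u hu) 2
  rcases (show 0 ≤ α₁ + α₂ * δ by positivity).eq_or_lt with hκ | hκ
  · -- `ε = 0` is not admissible, but then `G` vanishes
    have hG0 : ∀ ξ, G ξ = 0 := fun ξ => by
      have hα : α₁ = 0 ∧ α₂ = 0 := ⟨by nlinarith, by nlinarith⟩
      simpa [hα] using hG ξ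
    refine ⟨1, one_pos, fun t ht => ?_⟩
    simp only [hG0, sub_zero, hβ₁, ← hκ, Real.sqrt_zero]
    linarith [mul_nonneg (sq_nonneg N) ht]
  · set ε := Real.sqrt (α₁ + α₂ * δ)
    have hε : 0 < ε := Real.sqrt_pos.2 hκ
    refine ⟨(1 + ε⁻¹) * α₂ * δ + 1, by positivity, fun t ht => ?_⟩
    have hβ : (1 + ε) + (1 + ε⁻¹) * (α₁ + α₂ * δ) = β₁ := by
      rw [hβ₁, ← Real.sq_sqrt hκ.le]
      field_simp
      ring
    have hsupp' : ∀ᵐ θ ∂μ₀, θ ≤ 0 :=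
      (measure_eq_zero_iff_ae_notMem.1 hsupp).mono fun θ h => not_lt.1 h
    have key := integral_exp_mul_norm_sub_sq_le hε hα₂ hsupp' hδint hG hX hXN ht
    rw [← hδ, hβ] at key
    linarith [mul_nonneg (sq_nonneg N) ht]

theorem stmt_10 (d : ℕ) (r α₁ α₂ : ℝ) (hr : 0 < r) (hα₁ : 0 ≤ α₁) (hα₂ : 0 ≤ α₂)
    (μ₀ : Measure ℝ) [IsProbabilityMeasure μ₀] (hsupp : μ₀ (Set.Ioi 0) = 0)
    (δ : ℝ) (hδ : δ = ∫ θ, Real.exp (-2 * r * θ) ∂μ₀)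
    (hδint : Integrable (fun θ => Real.exp (-2 * r * θ)) μ₀)
    (hsmall : α₁ + α₂ * δ < 1)
    (G : (ℝ → EuclideanSpace ℝ (Fin d)) → EuclideanSpace ℝ (Fin d))
    (hG : ∀ ξ : ℝ → EuclideanSpace ℝ (Fin d),
      ‖G ξ‖ ^ 2 ≤ α₁ * ‖ξ 0‖ ^ 2 + α₂ * ∫ θ, ‖ξ θ‖ ^ 2 ∂μ₀)
    (X : ℝ → EuclideanSpace ℝ (Fin d)) (hX : Continuous X)
    (N : ℝ) (hN : ∀ θ : ℝ, θ ≤ 0 → Real.exp (r * θ) * ‖X θ‖ ≤ N)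
    (β₁ : ℝ) (hβ₁ : β₁ = (1 + Real.sqrt (α₁ + α₂ * δ)) ^ 2) :
    ∃ c₁ : ℝ, 0 < c₁ ∧ ∀ t : ℝ, 0 ≤ t →
      ∫ s in (0:ℝ)..t, Real.exp (2 * r * s) * ‖X s - G (fun θ => X (s + θ))‖ ^ 2
        ≤ c₁ * N ^ 2 * t
          + β₁ * ∫ s in (0:ℝ)..t, Real.exp (2 * r * s) * ‖X s‖ ^ 2 :=
  stmt_10_general d r α₁ α₂ hα₁ hα₂ μ₀ hsupp δ hδ hδint G hG X hX N hN β₁ hβ₁
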